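/- For all real t₁ > 0 and t₂ > 0 there exist a positive integer m and a complex number a with |a| < 1 and Im a ≠ 0 such that 1 − |a|² = (t₁/2^m)·|1 − a|² and 1 − |a|² = (t₂/2^m)·|1 + a|². -/

import Mathlib

/-! The Cayley transform `w ↦ (w - 1) / (w + 1)` maps the right half-plane onto the unit disc, and
for `a = (w - 1) / (w + 1)` one has `1 - |a|² = Re w · |1 - a|²` and `|1 + a|² = |w|² · |1 - a|²`.
So it suffices to find `w` with `Re w = t₁ / 2^m`, `|w|² = t₁ / t₂` and `Im w ≠ 0`, which is possible
as soon as `(t₁ / 2^m)² < t₁ / t₂`, i.e. `t₁ t₂ < 4^m`. -/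

open Complex

noncomputable def cayley (w : ℂ) : ℂ := (w - 1) / (w + 1)

section Cayley

variable {w : ℂ}

theorem one_sub_cayley (hw : w + 1 ≠ 0) : 1 - cayley w = 2 / (w + 1) := by
  unfold cayley; field_simp; ring

theorem one_add_cayley (hw : w + 1 ≠ 0) : 1 + cayley w = 2 * w / (w + 1) := by
  unfold cayley; field_simp; ring

theorem sq_norm_add_one_sub_sq_norm_sub_one (w : ℂ) : ‖w + 1‖ ^ 2 - ‖w - 1‖ ^ 2 = 4 * w.re := by
  simp only [Complex.sq_norm, normSq_apply, add_re, add_im, sub_re, sub_im, one_re, one_im]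
  ring

theorem one_sub_sq_norm_cayley (hw : w + 1 ≠ 0) :
    1 - ‖cayley w‖ ^ 2 = w.re * ‖1 - cayley w‖ ^ 2 := by
  have hdiff := sq_norm_add_one_sub_sq_norm_sub_one w
  have hpos : 0 < ‖w + 1‖ := norm_pos_iff.2 hw
  rw [one_sub_cayley hw, cayley, norm_div, norm_div, div_pow, div_pow]
  field_simp
  norm_num
  linarith

theorem one_sub_sq_norm_cayley_eq_mul_one_add (hw : w + 1 ≠ 0) (hw₀ : w ≠ 0) :
    1 - ‖cayley w‖ ^ 2 = w.re / ‖w‖ ^ 2 * ‖1 + cayley w‖ ^ 2 := by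
  have hpos : 0 < ‖w‖ := norm_pos_iff.2 hw₀
  rw [one_sub_sq_norm_cayley hw, one_sub_cayley hw, one_add_cayley hw, norm_div, norm_div,
    norm_mul]
  field_simp

theorem add_one_ne_zero_of_re_pos (hw : 0 < w.re) : w + 1 ≠ 0 := fun h => by
  have hre := congrArg re h
  simp only [add_re, one_re, zero_re] at hre
  linarith

theorem norm_cayley_lt_one (hw : 0 < w.re) : ‖cayley w‖ < 1 := by
  have hw₁ := add_one_ne_zero_of_re_pos hw
  have hne : 1 - cayley w ≠ 0 := by
    rw [one_sub_cayley hw₁]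
    exact div_ne_zero two_ne_zero hw₁
  have hsq : ‖cayley w‖ ^ 2 < 1 := by
    have hpos : 0 < w.re * ‖1 - cayley w‖ ^ 2 := by positivity
    linarith [one_sub_sq_norm_cayley hw₁]
  exact (sq_lt_one_iff₀ (norm_nonneg _)).1 hsq

theorem cayley_im (w : ℂ) : (cayley w).im = 2 * w.im / ‖w + 1‖ ^ 2 := by
  rw [cayley, div_im, Complex.sq_norm]
  simp only [add_re, add_im, sub_re, sub_im, one_re, one_im]
  ring

theorem cayley_im_ne_zero (hw : w.im ≠ 0) : (cayley w).im ≠ 0 := by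
  have hw₁ : w + 1 ≠ 0 := fun h => hw (by simpa using congrArg im h)
  rw [cayley_im]
  exact div_ne_zero (mul_ne_zero two_ne_zero hw) (pow_ne_zero 2 (norm_ne_zero_iff.2 hw₁))

end Cayley

theorem exists_re_eq_im_ne_zero_sq_norm_eq {s r : ℝ} (h : s ^ 2 < r) :
    ∃ w : ℂ, w.re = s ∧ w.im ≠ 0 ∧ ‖w‖ ^ 2 = r := by
  refine ⟨⟨s, √(r - s ^ 2)⟩, rfl, (Real.sqrt_pos.2 (sub_pos.2 h)).ne', ?_⟩
  rw [Complex.sq_norm, normSq_mk, ← sq, ← sq, Real.sq_sqrt (sub_pos.2 h).le]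
  ring

theorem exists_pos_lt_four_pow (x : ℝ) : ∃ m : ℕ, 0 < m ∧ x < 4 ^ m := by
  obtain ⟨n, hn⟩ := pow_unbounded_of_one_lt x (by norm_num : (1 : ℝ) < 4)
  exact ⟨n + 1, n.succ_pos, hn.trans (pow_lt_pow_right₀ (by norm_num) n.lt_succ_self)⟩

theorem stmt_13 (t₁ t₂ : ℝ) (ht₁ : 0 < t₁) (ht₂ : 0 < t₂) :
    ∃ (m : ℕ), 0 < m ∧ ∃ a : ℂ, ‖a‖ < 1 ∧ a.im ≠ 0 ∧
      1 - ‖a‖ ^ 2 = (t₁ / 2 ^ m) * ‖1 - a‖ ^ 2 ∧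
      1 - ‖a‖ ^ 2 = (t₂ / 2 ^ m) * ‖1 + a‖ ^ 2 := by
  obtain ⟨m, hm, hlt⟩ := exists_pos_lt_four_pow (t₁ * t₂)
  have hs : (t₁ / 2 ^ m) ^ 2 < t₁ / t₂ := by
    rw [div_pow, ← pow_mul, mul_comm, pow_mul, div_lt_div_iff₀ (by positivity) ht₂]
    norm_num
    linarith [mul_lt_mul_of_pos_left hlt ht₁]
  obtain ⟨w, hre, him, hnorm⟩ := exists_re_eq_im_ne_zero_sq_norm_eq hs
  have hre_pos : 0 < w.re := hre ▸ by positivity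
  have hw₀ : w ≠ 0 := fun h => by simp [h] at hre_pos
  have hw₁ := add_one_ne_zero_of_re_pos hre_pos
  refine ⟨m, hm, cayley w, norm_cayley_lt_one hre_pos, cayley_im_ne_zero him, ?_, ?_⟩
  · rw [one_sub_sq_norm_cayley hw₁, hre]
  · rw [one_sub_sq_norm_cayley_eq_mul_one_add hw₁ hw₀, hre, hnorm]
    congr 1
    field_simp
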